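/- Let n ≥ 1 be an integer and let λ > n² be a real number. Define h : ℝ → ℝ by h(x) = log( n² / ( λ + √(λ² − n⁴)·cos(nx) ) ). Then: (i) h''(x) = −n²·e^{2h(x)} + λ·e^{h(x)} for all x; (ii) ∫₀^{2π} e^{h(x)} dx = 2π; (iii) (1/(2π)) ∫₀^{2π} ( −n²·e^{2h(x)} + h'(x)² ) dx = −n². In particular the value in (iii) is independent of λ. -/

import Mathlib

/-!
Write `w = λ + b cos (n x)` with `b² = λ² - n⁴`, so that `e^h = n² / w` and `h' = n b sin (n x) / w`.
Both the equation `h'' = -n² e^{2h} + λ e^h` and its first integral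
`h'² = -n² e^{2h} + 2λ e^h - n²` are then polynomial identities in `sin`, `cos` modulo
`sin² + cos² = 1` and `b² = λ² - n⁴`. Subtracting them, the integrand of (iii) is `2h'' - n²`,
which integrates to `-2πn²` because `h'` vanishes at `0` and `2π`. For (ii), `n² / w` has the
explicit antiderivative `x - (2/n) arctan (b sin (n x) / (λ + n² + b cos (n x)))`, which also
returns its value `x` at `0` and `2π`.
-/

open Real

theorem add_mul_cos_pos {a b : ℝ} (hb : |b| < a) (t : ℝ) : 0 < a + b * cos t := by
  have : |b * cos t| ≤ |b| := by
    rw [abs_mul]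
    exact mul_le_of_le_one_right (abs_nonneg b) (abs_cos_le_one t)
  linarith [neg_abs_le (b * cos t)]

-- From the Weierstrass substitution `u = tan (t/2)`, corrected to be continuous across `t = π`.
theorem hasDerivAt_sub_two_mul_arctan {a b c : ℝ} (hc : 0 < c) (hb : |b| < a)
    (habc : a ^ 2 - b ^ 2 = c ^ 2) (t : ℝ) :
    HasDerivAt (fun t => t - 2 * arctan (b * sin t / (a + c + b * cos t)))
      (c / (a + b * cos t)) t := by
  have hw := add_mul_cos_pos hb t
  have hv : 0 < a + c + b * cos t := by linarith
  have hu : HasDerivAt (fun t => b * sin t / (a + c + b * cos t))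
      ((b * cos t * (a + c + b * cos t) - b * sin t * (b * -sin t)) / (a + c + b * cos t) ^ 2) t :=
    ((hasDerivAt_sin t).const_mul b).div (((hasDerivAt_cos t).const_mul b).const_add (a + c)) hv.ne'
  refine ((hasDerivAt_id t).sub (hu.arctan.const_mul 2)).congr_deriv ?_
  have hac : 0 < a + c := by linarith [abs_nonneg b]
  have hs := sin_sq_add_cos_sq t
  have hsq : 1 + (b * sin t / (a + c + b * cos t)) ^ 2
      = 2 * (a + c) * (a + b * cos t) / (a + c + b * cos t) ^ 2 := by
    field_simp
    linear_combination -habc + b ^ 2 * hs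
  rw [hsq]
  field_simp
  linear_combination habc - b ^ 2 * hs

noncomputable def explicitCriticalPoint (n lam b x : ℝ) : ℝ :=
  log (n ^ 2 / (lam + b * cos (n * x)))

section ExplicitCriticalPoint

variable {n lam b : ℝ}

theorem exp_explicitCriticalPoint (hn : n ≠ 0) (hb : |b| < lam) (x : ℝ) :
    exp (explicitCriticalPoint n lam b x) = n ^ 2 / (lam + b * cos (n * x)) :=
  exp_log (div_pos (by positivity) (add_mul_cos_pos hb _))

theorem exp_two_mul_explicitCriticalPoint (hn : n ≠ 0) (hb : |b| < lam) (x : ℝ) :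
    exp (2 * explicitCriticalPoint n lam b x) = (n ^ 2 / (lam + b * cos (n * x))) ^ 2 := by
  rw [two_mul, exp_add, exp_explicitCriticalPoint hn hb, ← sq]

theorem hasDerivAt_explicitCriticalPoint (hn : n ≠ 0) (hb : |b| < lam) (x : ℝ) :
    HasDerivAt (explicitCriticalPoint n lam b)
      (n * b * sin (n * x) / (lam + b * cos (n * x))) x := by
  have hw := (add_mul_cos_pos hb (n * x)).ne'
  have hnx : HasDerivAt (fun y => n * y) n x := hasDerivAt_const_mul n
  have hlog := ((hasDerivAt_const x (n ^ 2)).fun_div ((hnx.cos.const_mul b).const_add lam) hw).log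
    (div_ne_zero (by positivity) hw)
  refine hlog.congr_deriv ?_
  field_simp
  ring

theorem deriv_explicitCriticalPoint (hn : n ≠ 0) (hb : |b| < lam) :
    deriv (explicitCriticalPoint n lam b) = fun x => n * b * sin (n * x) / (lam + b * cos (n * x)) :=
  funext fun x => (hasDerivAt_explicitCriticalPoint hn hb x).deriv

theorem hasDerivAt_deriv_explicitCriticalPoint (hn : n ≠ 0) (hb : |b| < lam)
    (hb2 : b ^ 2 = lam ^ 2 - n ^ 4) (x : ℝ) :
    HasDerivAt (deriv (explicitCriticalPoint n lam b))
      (-n ^ 2 * exp (2 * explicitCriticalPoint n lam b x)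
        + lam * exp (explicitCriticalPoint n lam b x)) x := by
  have hw := (add_mul_cos_pos hb (n * x)).ne'
  have hnx : HasDerivAt (fun y => n * y) n x := hasDerivAt_const_mul n
  rw [deriv_explicitCriticalPoint hn hb]
  refine ((hnx.sin.const_mul (n * b)).div ((hnx.cos.const_mul b).const_add lam) hw).congr_deriv ?_
  rw [exp_two_mul_explicitCriticalPoint hn hb, exp_explicitCriticalPoint hn hb]
  field_simp
  linear_combination hb2 + b ^ 2 * sin_sq_add_cos_sq (n * x)

theorem deriv_explicitCriticalPoint_sq (hn : n ≠ 0) (hb : |b| < lam)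
    (hb2 : b ^ 2 = lam ^ 2 - n ^ 4) (x : ℝ) :
    deriv (explicitCriticalPoint n lam b) x ^ 2
      = -n ^ 2 * exp (2 * explicitCriticalPoint n lam b x)
        + 2 * lam * exp (explicitCriticalPoint n lam b x) - n ^ 2 := by
  have hw := (add_mul_cos_pos hb (n * x)).ne'
  rw [deriv_explicitCriticalPoint hn hb, exp_two_mul_explicitCriticalPoint hn hb,
    exp_explicitCriticalPoint hn hb]
  field_simp
  linear_combination hb2 + b ^ 2 * sin_sq_add_cos_sq (n * x)

theorem continuous_explicitCriticalPoint (hn : n ≠ 0) (hb : |b| < lam) :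
    Continuous (explicitCriticalPoint n lam b) :=
  continuous_iff_continuousAt.2 fun x => (hasDerivAt_explicitCriticalPoint hn hb x).continuousAt

theorem continuous_deriv_explicitCriticalPoint (hn : n ≠ 0) (hb : |b| < lam) :
    Continuous (deriv (explicitCriticalPoint n lam b)) := by
  rw [deriv_explicitCriticalPoint hn hb]
  exact Continuous.div (by fun_prop) (by fun_prop) fun x => (add_mul_cos_pos hb _).ne'

theorem integral_exp_explicitCriticalPoint (hn : n ≠ 0) (hb : |b| < lam)
    (hb2 : b ^ 2 = lam ^ 2 - n ^ 4) {T : ℝ} (hT : sin (n * T) = 0) :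
    ∫ x in (0 : ℝ)..T, exp (explicitCriticalPoint n lam b x) = T := by
  have hF : ∀ x, HasDerivAt
      (fun x => (n * x - 2 * arctan (b * sin (n * x) / (lam + n ^ 2 + b * cos (n * x)))) / n)
      (exp (explicitCriticalPoint n lam b x)) x := by
    intro x
    have hnx : HasDerivAt (fun y => n * y) n x := hasDerivAt_const_mul n
    have hG := hasDerivAt_sub_two_mul_arctan (c := n ^ 2) (by positivity) hb (by linarith) (n * x)
    refine ((hG.comp x hnx).div_const n).congr_deriv ?_
    rw [exp_explicitCriticalPoint hn hb]
    field_simp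
  have hcont : Continuous fun x => exp (explicitCriticalPoint n lam b x) :=
    (continuous_explicitCriticalPoint hn hb).rexp
  rw [intervalIntegral.integral_eq_sub_of_hasDerivAt (fun x _ => hF x)
    (hcont.intervalIntegrable 0 T)]
  simp [hT, hn]

theorem integral_energy_explicitCriticalPoint (hn : n ≠ 0) (hb : |b| < lam)
    (hb2 : b ^ 2 = lam ^ 2 - n ^ 4) {T : ℝ} (hT : sin (n * T) = 0) :
    ∫ x in (0 : ℝ)..T, (-n ^ 2 * exp (2 * explicitCriticalPoint n lam b x)
      + deriv (explicitCriticalPoint n lam b) x ^ 2) = -n ^ 2 * T := by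
  have hF : ∀ x, HasDerivAt (fun x => 2 * deriv (explicitCriticalPoint n lam b) x - n ^ 2 * x)
      (-n ^ 2 * exp (2 * explicitCriticalPoint n lam b x)
        + deriv (explicitCriticalPoint n lam b) x ^ 2) x := by
    intro x
    refine (((hasDerivAt_deriv_explicitCriticalPoint hn hb hb2 x).const_mul 2).sub
      ((hasDerivAt_id x).const_mul (n ^ 2))).congr_deriv ?_
    rw [deriv_explicitCriticalPoint_sq hn hb hb2]
    ring
  have hcont : Continuous fun x => -n ^ 2 * exp (2 * explicitCriticalPoint n lam b x)
      + deriv (explicitCriticalPoint n lam b) x ^ 2 := by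
    have := continuous_explicitCriticalPoint hn hb
    have := continuous_deriv_explicitCriticalPoint hn hb
    fun_prop
  rw [intervalIntegral.integral_eq_sub_of_hasDerivAt (fun x _ => hF x)
    (hcont.intervalIntegrable 0 T), deriv_explicitCriticalPoint hn hb]
  simp [hT]

end ExplicitCriticalPoint

/-- Properties of the explicit non-constant critical points: for an integer
`n ≥ 1` and `λ > n²`, the function
`h(x) = log( n² / (λ + √(λ²−n⁴) cos(nx)) )` satisfies
(i) `h'' = −n² e^{2h} + λ e^{h}`, (ii) `∫₀^{2π} e^{h} = 2π`, and
(iii) `(1/(2π)) ∫₀^{2π} (−n² e^{2h} + h'²) = −n²`, independently of `λ`. -/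
theorem explicit_critical_point_properties (n : ℕ) (hn : 1 ≤ n) (lam : ℝ)
    (hlam : (n : ℝ) ^ 2 < lam) (h : ℝ → ℝ)
    (hdef : ∀ x, h x = Real.log ((n : ℝ) ^ 2 /
      (lam + Real.sqrt (lam ^ 2 - (n : ℝ) ^ 4) * Real.cos (n * x)))) :
    (∀ x, deriv (deriv h) x =
        -(n : ℝ) ^ 2 * Real.exp (2 * h x) + lam * Real.exp (h x)) ∧
      (∫ x in (0:ℝ)..(2 * π), Real.exp (h x)) = 2 * π ∧
      (1 / (2 * π)) * (∫ x in (0:ℝ)..(2 * π),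
          (-(n : ℝ) ^ 2 * Real.exp (2 * h x) + (deriv h x) ^ 2)) = -(n : ℝ) ^ 2 := by
  have hn0 : (n : ℝ) ≠ 0 := by positivity
  have hb2 : √(lam ^ 2 - (n : ℝ) ^ 4) ^ 2 = lam ^ 2 - (n : ℝ) ^ 4 :=
    sq_sqrt (by nlinarith [sq_nonneg ((n : ℝ) ^ 2)])
  have hb : |√(lam ^ 2 - (n : ℝ) ^ 4)| < lam :=
    abs_lt_of_sq_lt_sq (by rw [hb2]; linarith [pow_pos (show (0 : ℝ) < n by positivity) 4])
      ((sq_nonneg _).trans hlam.le)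
  have hT : sin (n * (2 * π)) = 0 := by simpa using sin_periodic.nat_mul_eq n
  obtain rfl : h = explicitCriticalPoint n lam √(lam ^ 2 - (n : ℝ) ^ 4) := funext hdef
  refine ⟨fun x => (hasDerivAt_deriv_explicitCriticalPoint hn0 hb hb2 x).deriv,
    integral_exp_explicitCriticalPoint hn0 hb hb2 hT, ?_⟩
  rw [integral_energy_explicitCriticalPoint hn0 hb hb2 hT]
  field_simp
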